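/- arXiv:1809.00636 — 2 statements merged into one kernel-verified Lean document; each statement's English description precedes it below -/
import Mathlib

section
/- Let N be a strictly convex C^1-regular norm on ℝ^n. Then the Gauss map G : S_N → S^{n-1} is a homeomorphism from the N-unit sphere onto the Euclidean unit sphere, it is antipodally symmetric, i.e. G(−v) = −G(v) for all v ∈ S_N, and ⟨v, G(v)⟩ ≠ 0 for all v ∈ S_N. -/
/-!
For a differentiable seminorm `p`, convexity gives `dp(x) ≤ p` and Euler's relation
`dp(x) x = p x`, so a point `x` of the unit sphere `S = {p = 1}` maximises `⟪∇p(x), ·⟫` on `S`, with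
positive value. When `p` is strictly convex, a linear functional has at most one maximiser on `S`
with positive value, so the Gauss map `x ↦ ∇p(x)/‖∇p(x)‖` is injective. Conversely, if `x` maximises
`⟪u, ·⟫` on the compact set `S` with value `M`, homogeneity gives `⟪u, ·⟫ ≤ M p`, so `x` minimises
`M p - ⟪u, ·⟫` and `M ∇p(x) = u`: the Gauss map is onto. A continuous bijection from a compact space
to the sphere is a homeomorphism, and `p (-x) = p x` makes the gradient odd.
-/

open Set NormedSpace
open scoped RealInnerProductSpace

theorem ConvexOn.fderiv_sub_le {E : Type*} [NormedAddCommGroup E] [NormedSpace ℝ E] {f : E → ℝ}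
    (hf : ConvexOn ℝ univ f) {x : E} (hd : DifferentiableAt ℝ f x) (z : E) :
    fderiv ℝ f x (z - x) ≤ f z - f x := by
  have hline : ConvexOn ℝ univ (f ∘ AffineMap.lineMap (k := ℝ) x z) := hf.comp_affineMap _
  have hderiv : HasDerivAt (f ∘ AffineMap.lineMap (k := ℝ) x z) (fderiv ℝ f x (z - x)) 0 := by
    have hf' : HasFDerivAt f (fderiv ℝ f x) (AffineMap.lineMap x z (0 : ℝ)) := by
      simpa using hd.hasFDerivAt
    exact hf'.comp_hasDerivAt 0 AffineMap.hasDerivAt_lineMap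
  simpa [slope] using hline.le_slope_of_hasDerivAt (mem_univ 0) (mem_univ 1) zero_lt_one hderiv

theorem ContDiffOn.continuousOn_gradient {𝕜 F : Type*} [RCLike 𝕜] [NormedAddCommGroup F]
    [InnerProductSpace 𝕜 F] [CompleteSpace F] {f : F → 𝕜} {s : Set F} (hf : ContDiffOn 𝕜 1 f s)
    (hs : IsOpen s) : ContinuousOn (gradient f) s :=
  (InnerProductSpace.toDual 𝕜 F).symm.continuous.comp_continuousOn
    (hf.continuousOn_fderiv_of_isOpen hs le_rfl)

namespace Seminorm

def IsStrictlyConvex {E : Type*} [AddCommGroup E] [Module ℝ E] (p : Seminorm ℝ E) : Prop :=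
  ∀ x y, p x = 1 → p y = 1 → x ≠ y → p ((1 / 2 : ℝ) • (x + y)) < 1

section NormedSpace

variable {E : Type*} [NormedAddCommGroup E] [NormedSpace ℝ E] (p : Seminorm ℝ E) {x : E}

theorem apply_inv_smul_self (hx : p x ≠ 0) : p ((p x)⁻¹ • x) = 1 := by
  rw [map_smul_eq_mul, norm_inv, Real.norm_of_nonneg (apply_nonneg p x), inv_mul_cancel₀ hx]

theorem isCompact_setOf_apply_eq_one [FiniteDimensional ℝ E] (hp : ∀ x, p x = 0 → x = 0) :
    IsCompact {x | p x = 1} := by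
  have hcont : Continuous p := continuousOn_univ.mp (p.convexOn.continuousOn isOpen_univ)
  have hpne : ∀ x ∈ Metric.sphere (0 : E) 1, p x ≠ 0 := fun x hx h => by
    simp [hp x h] at hx
  refine ((isCompact_sphere (0 : E) 1).image_of_continuousOn
    ((hcont.continuousOn.inv₀ hpne).smul continuousOn_id)).of_isClosed_subset
    (isClosed_eq hcont continuous_const) fun y hy => ?_
  have hy0 : y ≠ 0 := fun h => by simp [h] at hy
  have hny : 0 < ‖y‖ := norm_pos_iff.mpr hy0
  refine ⟨‖y‖⁻¹ • y, by simp [norm_smul, hny.ne'], ?_⟩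
  change p y = 1 at hy
  change (p (‖y‖⁻¹ • y))⁻¹ • ‖y‖⁻¹ • y = y
  rw [map_smul_eq_mul, norm_inv, norm_norm, hy, mul_one, inv_inv, smul_inv_smul₀ hny.ne']

theorem fderiv_apply_le (hd : DifferentiableAt ℝ p x) (y : E) : fderiv ℝ p x y ≤ p y := by
  have h := p.convexOn.fderiv_sub_le hd (x + y)
  rw [add_sub_cancel_left] at h
  linarith [map_add_le_add p x y]

theorem fderiv_apply_self (hd : DifferentiableAt ℝ p x) : fderiv ℝ p x x = p x := by
  have hle := p.convexOn.fderiv_sub_le hd ((2 : ℝ) • x)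
  have hge := p.convexOn.fderiv_sub_le hd 0
  rw [map_smul_eq_mul, Real.norm_two, two_smul, add_sub_cancel_right] at hle
  rw [zero_sub, map_neg, map_zero] at hge
  linarith

theorem fderiv_neg : fderiv ℝ p (-x) = -fderiv ℝ p x := by
  have h : (p <| (-1 : ℝ) • ·) = p := funext fun y => by rw [neg_one_smul, map_neg_eq_map]
  have := fderiv_comp_smul (f := ⇑p) (x := x) (-1 : ℝ)
  rw [h, neg_one_smul, neg_one_smul] at this
  rw [this, neg_neg]

theorem differentiableAt_of_contDiffOn (hC1 : ContDiffOn ℝ 1 p {0}ᶜ) (hx : p x ≠ 0) :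
    DifferentiableAt ℝ p x :=
  (hC1.differentiableOn one_ne_zero).differentiableAt
    (isOpen_compl_singleton.mem_nhds fun h : x = 0 => hx (h ▸ map_zero p))

end NormedSpace

variable {E : Type*} [NormedAddCommGroup E] [InnerProductSpace ℝ E] (p : Seminorm ℝ E)

theorem inner_le_mul_of_isMaxOn (hp : ∀ x, p x = 0 → x = 0) {u x₀ : E}
    (hmax : IsMaxOn (fun y => ⟪u, y⟫) {y | p y = 1} x₀) (y : E) : ⟪u, y⟫ ≤ ⟪u, x₀⟫ * p y := by
  rcases eq_or_ne y 0 with rfl | hy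
  · simp
  have hpy : 0 < p y := (apply_nonneg p y).lt_of_ne' (mt (hp y) hy)
  have h : (p y)⁻¹ * ⟪u, y⟫ ≤ ⟪u, x₀⟫ := by
    simpa only [real_inner_smul_right] using isMaxOn_iff.mp hmax _ (p.apply_inv_smul_self hpy.ne')
  rwa [inv_mul_le_iff₀ hpy, mul_comm] at h

theorem eq_of_isMaxOn_inner (hp : ∀ x, p x = 0 → x = 0) (hsc : p.IsStrictlyConvex) {u x y : E}
    (hx : p x = 1) (hy : p y = 1) (hmx : IsMaxOn (fun z => ⟪u, z⟫) {z | p z = 1} x)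
    (hmy : IsMaxOn (fun z => ⟪u, z⟫) {z | p z = 1} y) (hpos : 0 < ⟪u, x⟫) : x = y := by
  by_contra hne
  have hxy : ⟪u, y⟫ = ⟪u, x⟫ := le_antisymm (isMaxOn_iff.mp hmx _ hy) (isMaxOn_iff.mp hmy _ hx)
  have hmid := p.inner_le_mul_of_isMaxOn hp hmx ((1 / 2 : ℝ) • (x + y))
  rw [real_inner_smul_right, inner_add_right, hxy] at hmid
  nlinarith [hsc x y hx hy hne]

variable [CompleteSpace E] {x : E}

theorem inner_gradient_le (hd : DifferentiableAt ℝ p x) (y : E) : ⟪gradient p x, y⟫ ≤ p y := by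
  rw [inner_gradient_left]
  exact p.fderiv_apply_le hd y

theorem inner_gradient_self (hd : DifferentiableAt ℝ p x) : ⟪gradient p x, x⟫ = p x := by
  rw [inner_gradient_left, p.fderiv_apply_self hd]

theorem gradient_neg : gradient p (-x) = -gradient p x := by
  simp only [gradient, p.fderiv_neg, map_neg]

theorem gradient_ne_zero (hd : DifferentiableAt ℝ p x) (hx : p x ≠ 0) : gradient p x ≠ 0 := by
  intro h
  rw [← p.inner_gradient_self hd, h, inner_zero_left] at hx
  exact hx rfl

theorem inner_normalize_gradient_pos (hd : DifferentiableAt ℝ p x) (hx : 0 < p x) :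
    0 < ⟪x, normalize (gradient p x)⟫ := by
  have hg := norm_pos_iff.mpr (p.gradient_ne_zero hd hx.ne')
  rw [NormedSpace.normalize, real_inner_smul_right, real_inner_comm, p.inner_gradient_self hd]
  positivity

theorem isMaxOn_inner_normalize_gradient (hd : DifferentiableAt ℝ p x) (hx : p x = 1) :
    IsMaxOn (fun y => ⟪normalize (gradient p x), y⟫) {y | p y = 1} x := by
  refine isMaxOn_iff.mpr fun y (hy : p y = 1) => ?_
  simp only [NormedSpace.normalize, real_inner_smul_left]
  gcongr
  rw [p.inner_gradient_self hd, hx, ← hy]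
  exact p.inner_gradient_le hd y

theorem eq_of_normalize_gradient_eq (hp : ∀ x, p x = 0 → x = 0) (hsc : p.IsStrictlyConvex)
    {x y : E} (hx : p x = 1) (hy : p y = 1) (hdx : DifferentiableAt ℝ p x)
    (hdy : DifferentiableAt ℝ p y) (h : normalize (gradient p x) = normalize (gradient p y)) :
    x = y := by
  refine p.eq_of_isMaxOn_inner hp hsc hx hy (p.isMaxOn_inner_normalize_gradient hdx hx) ?_ ?_
  · rw [h]
    exact p.isMaxOn_inner_normalize_gradient hdy hy
  · rw [real_inner_comm]
    exact p.inner_normalize_gradient_pos hdx (hx ▸ one_pos)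

theorem smul_gradient_eq_of_isMaxOn (hp : ∀ x, p x = 0 → x = 0) {u x₀ : E} (hx₀ : p x₀ = 1)
    (hd : DifferentiableAt ℝ p x₀) (hmax : IsMaxOn (fun y => ⟪u, y⟫) {y | p y = 1} x₀) :
    ⟪u, x₀⟫ • gradient p x₀ = u := by
  set M := ⟪u, x₀⟫
  have hmin : IsLocalMin (fun y => M * p y - ⟪u, y⟫) x₀ := Filter.Eventually.of_forall fun y => by
    have := p.inner_le_mul_of_isMaxOn hp hmax y
    simp only [hx₀, mul_one]
    linarith
  have hderiv : HasFDerivAt (fun y => M * p y - ⟪u, y⟫) (M • fderiv ℝ p x₀ - innerSL ℝ u) x₀ :=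
    (hd.hasFDerivAt.const_mul M).sub (innerSL ℝ u).hasFDerivAt
  have hzero : M • fderiv ℝ p x₀ = innerSL ℝ u := sub_eq_zero.mp (hmin.hasFDerivAt_eq_zero hderiv)
  refine ext_inner_right ℝ fun y => ?_
  simpa [real_inner_smul_left, inner_gradient_left] using congrArg (fun L => L y) hzero

theorem exists_normalize_gradient_eq [FiniteDimensional ℝ E] (hp : ∀ x, p x = 0 → x = 0)
    (hd : ∀ x, p x = 1 → DifferentiableAt ℝ p x) {u : E} (hu : u ≠ 0) :
    ∃ x, p x = 1 ∧ normalize (gradient p x) = normalize u := by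
  have hpu : 0 < p u := (apply_nonneg p u).lt_of_ne' (mt (hp u) hu)
  obtain ⟨x, hx, hmax⟩ := (p.isCompact_setOf_apply_eq_one hp).exists_isMaxOn (f := fun y => ⟪u, y⟫)
    ⟨_, p.apply_inv_smul_self hpu.ne'⟩ (by fun_prop)
  have hM : 0 < ⟪u, x⟫ := by
    have h := isMaxOn_iff.mp hmax _ (p.apply_inv_smul_self hpu.ne')
    simp only [real_inner_smul_right, real_inner_self_eq_norm_sq] at h
    exact lt_of_lt_of_le (by positivity) h
  refine ⟨x, hx, ?_⟩
  rw [← p.smul_gradient_eq_of_isMaxOn hp hx (hd x hx) hmax, normalize_smul_of_pos hM]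

theorem exists_homeomorph_sphere_normalize_gradient [FiniteDimensional ℝ E]
    (hp : ∀ x, p x = 0 → x = 0) (hsc : p.IsStrictlyConvex) (hC1 : ContDiffOn ℝ 1 p {0}ᶜ) :
    ∃ H : {x // p x = 1} ≃ₜ Metric.sphere (0 : E) 1,
      ∀ v : {x // p x = 1}, (H v : E) = normalize (gradient p v) := by
  have hne : {x | p x = 1} ⊆ {0}ᶜ := fun x (hx : p x = 1) (h : x = 0) => by simp [h] at hx
  have hd : ∀ x, p x = 1 → DifferentiableAt ℝ p x := fun x hx =>
    p.differentiableAt_of_contDiffOn hC1 (hx.trans_ne one_ne_zero)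
  have hg : ∀ x ∈ {x | p x = 1}, gradient p x ≠ 0 := fun x hx =>
    p.gradient_ne_zero (hd x hx) (Eq.trans_ne hx one_ne_zero)
  have hcont : ContinuousOn (fun x => normalize (gradient p x)) {x | p x = 1} :=
    have hgrad := (hC1.continuousOn_gradient isOpen_compl_singleton).mono hne
    (hgrad.norm.inv₀ fun x hx => norm_ne_zero_iff.mpr (hg x hx)).smul hgrad
  have : CompactSpace {x // p x = 1} :=
    isCompact_iff_compactSpace.mp (p.isCompact_setOf_apply_eq_one hp)
  let f : {x // p x = 1} → Metric.sphere (0 : E) 1 := fun v =>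
    ⟨normalize (gradient p v), by simpa using norm_normalize_eq_one_iff.mpr (hg v v.2)⟩
  have hbij : Function.Bijective f := by
    refine ⟨fun v w h => Subtype.ext ?_, fun u => ?_⟩
    · exact p.eq_of_normalize_gradient_eq hp hsc v.2 w.2 (hd v v.2) (hd w w.2)
        (congrArg Subtype.val h)
    · obtain ⟨x, hx, hxu⟩ := p.exists_normalize_gradient_eq hp hd (ne_zero_of_mem_unit_sphere u)
      exact ⟨⟨x, hx⟩, Subtype.ext (hxu.trans (normalize_eq_self_of_norm_eq_one (by simp)))⟩
  have hf : Continuous f := hcont.domRestrict.subtype_mk _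
  exact ⟨hf.homeoOfEquivCompactToT2 (f := Equiv.ofBijective f hbij), fun v => rfl⟩

end Seminorm

/-- **Properties of the Gauss map of a strictly convex `C¹`-regular norm**
(Iseli, Lemma 3.1): the Gauss map `G(x) = ∇N(x)/|∇N(x)|` is a homeomorphism from
the `N`-unit sphere `S_N = {x : N x = 1}` onto the Euclidean unit sphere, it is
antipodally symmetric (`G(-v) = -G(v)` on `S_N`), and `⟨v, G v⟩ ≠ 0` on `S_N`. -/
theorem gauss_map_homeomorph (n : ℕ)
    (N : EuclideanSpace ℝ (Fin n) → ℝ)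
    (hN0 : ∀ x, N x = 0 ↔ x = 0)
    (hNhom : ∀ (c : ℝ) (x), N (c • x) = |c| * N x)
    (hNtri : ∀ x y, N (x + y) ≤ N x + N y)
    (hNsc : ∀ x y, N x = 1 → N y = 1 → x ≠ y → N ((1 / 2 : ℝ) • (x + y)) < 1)
    (hNC1 : ContDiffOn ℝ 1 N {(0 : EuclideanSpace ℝ (Fin n))}ᶜ)
    (G : EuclideanSpace ℝ (Fin n) → EuclideanSpace ℝ (Fin n))
    (hG : ∀ x, N x = 1 → G x = ‖gradient N x‖⁻¹ • gradient N x) :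
    (∃ H : {x : EuclideanSpace ℝ (Fin n) // N x = 1} ≃ₜ
        Metric.sphere (0 : EuclideanSpace ℝ (Fin n)) 1,
      ∀ v : {x : EuclideanSpace ℝ (Fin n) // N x = 1},
        (H v : EuclideanSpace ℝ (Fin n)) = G (v : EuclideanSpace ℝ (Fin n))) ∧
    (∀ v, N v = 1 → G (-v) = -G v) ∧
    (∀ v, N v = 1 → (inner ℝ v (G v) : ℝ) ≠ 0) := by
  let p : Seminorm ℝ (EuclideanSpace ℝ (Fin n)) :=
    Seminorm.of N hNtri fun c x => by rw [hNhom, Real.norm_eq_abs]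
  have hp : ∀ x, p x = 0 → x = 0 := fun x => (hN0 x).mp
  refine ⟨?_, fun v hv => ?_, fun v hv => ?_⟩
  · obtain ⟨H, hH⟩ := p.exists_homeomorph_sphere_normalize_gradient hp hNsc hNC1
    exact ⟨H, fun v => (hH v).trans (hG v v.2).symm⟩
  · rw [hG (-v) ((map_neg_eq_map p v).trans hv), hG v hv]
    exact (congrArg NormedSpace.normalize p.gradient_neg).trans (normalize_neg _)
  · have hd := p.differentiableAt_of_contDiffOn hNC1 (hv.trans_ne one_ne_zero)
    rw [hG v hv]
    exact (p.inner_normalize_gradient_pos hd (hv.symm ▸ one_pos : 0 < N v)).ne'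
end

section
/- Let N be a strictly convex C^1-regular norm on ℝ^n. Then there exist two vectors v, w ∈ S_N with v ≠ w and v ≠ −w such that the Gauss map fixes their radial directions: G(v) = v/|v| and G(w) = w/|w|, where |·| is the Euclidean norm. -/
/-!
`S_N` is compact, being the image of the Euclidean unit sphere under `x ↦ x / N(x)`, so `|·|²`
attains a maximum and a minimum on it. At any such constrained extremum `x₀`, Lagrange
multipliers give `∇N(x₀) = c • x₀`, and Euler's relation `⟨∇N(x₀), x₀⟩ = N(x₀) = 1` forces
`c > 0`, so `G(x₀) = x₀/|x₀|`. A maximum and a minimum of different Euclidean lengths are never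
equal or antipodal; if the lengths agree, `|·|` is constant on `S_N`, every point is an
extremum, and since `n ≥ 2` there are two points of `S_N` spanning a plane.
-/

open InnerProductSpace Module

lemma nonneg_of_abs_homogeneous_of_subadditive {E : Type*} [AddCommGroup E] [Module ℝ E]
    {N : E → ℝ} (hNhom : ∀ (c : ℝ) x, N (c • x) = |c| * N x)
    (hNtri : ∀ x y, N (x + y) ≤ N x + N y) (x : E) : 0 ≤ N x := by
  have h0 : N 0 = 0 := by simpa using hNhom 0 0
  have hneg : N (-x) = N x := by simpa using hNhom (-1) x
  have := hNtri x (-x)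
  rw [add_neg_cancel, h0, hneg] at this
  linarith

lemma pos_of_abs_homogeneous_of_subadditive {E : Type*} [AddCommGroup E] [Module ℝ E]
    {N : E → ℝ} (hN0 : ∀ x, N x = 0 ↔ x = 0)
    (hNhom : ∀ (c : ℝ) x, N (c • x) = |c| * N x) (hNtri : ∀ x y, N (x + y) ≤ N x + N y)
    {x : E} (hx : x ≠ 0) : 0 < N x :=
  (nonneg_of_abs_homogeneous_of_subadditive hNhom hNtri x).lt_of_ne' (mt (hN0 x).mp hx)

lemma inv_smul_self_eq_one {E : Type*} [AddCommGroup E] [Module ℝ E] {N : E → ℝ}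
    (hNhom : ∀ (c : ℝ) x, N (c • x) = |c| * N x) {x : E} (hx : 0 < N x) :
    N ((N x)⁻¹ • x) = 1 := by
  rw [hNhom, abs_of_pos (inv_pos.mpr hx), inv_mul_cancel₀ hx.ne']

section Homogeneous

variable {E : Type*} [NormedAddCommGroup E] [NormedSpace ℝ E] {N : E → ℝ}

lemma setOf_eq_one_eq_image_sphere (hN0 : ∀ x, N x = 0 ↔ x = 0)
    (hNhom : ∀ (c : ℝ) x, N (c • x) = |c| * N x) (hNtri : ∀ x y, N (x + y) ≤ N x + N y) :
    {x | N x = 1} = (fun x => (N x)⁻¹ • x) '' Metric.sphere (0 : E) 1 := by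
  ext y
  constructor
  · intro (hy : N y = 1)
    have hy0 : y ≠ 0 := by rintro rfl; simp [(hN0 0).mpr rfl] at hy
    have hny : 0 < ‖y‖ := norm_pos_iff.mpr hy0
    refine ⟨‖y‖⁻¹ • y, by simp [norm_smul, hny.ne'], ?_⟩
    simp only [hNhom, hy, abs_of_pos (inv_pos.mpr hny), mul_one, inv_inv, smul_inv_smul₀ hny.ne']
  · rintro ⟨x, hx, rfl⟩
    exact inv_smul_self_eq_one hNhom <| pos_of_abs_homogeneous_of_subadditive hN0 hNhom hNtri
      (ne_zero_of_mem_sphere one_ne_zero ⟨x, hx⟩)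

lemma isCompact_setOf_eq_one [FiniteDimensional ℝ E] (hN0 : ∀ x, N x = 0 ↔ x = 0)
    (hNhom : ∀ (c : ℝ) x, N (c • x) = |c| * N x) (hNtri : ∀ x y, N (x + y) ≤ N x + N y)
    (hNcont : ContinuousOn N {0}ᶜ) : IsCompact {x | N x = 1} := by
  rw [setOf_eq_one_eq_image_sphere hN0 hNhom hNtri]
  have hsphere : Metric.sphere (0 : E) 1 ⊆ {0}ᶜ := fun x hx =>
    ne_zero_of_mem_sphere one_ne_zero ⟨x, hx⟩
  refine (isCompact_sphere 0 1).image_of_continuousOn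
    (((hNcont.mono hsphere).inv₀ fun x hx => ?_).smul continuousOn_id)
  exact (pos_of_abs_homogeneous_of_subadditive hN0 hNhom hNtri (hsphere hx)).ne'

lemma exists_pair_eq_one_ne_ne_neg (hE : 1 < finrank ℝ E) (hN0 : ∀ x, N x = 0 ↔ x = 0)
    (hNhom : ∀ (c : ℝ) x, N (c • x) = |c| * N x) (hNtri : ∀ x y, N (x + y) ≤ N x + N y) :
    ∃ x y : E, N x = 1 ∧ N y = 1 ∧ x ≠ y ∧ x ≠ -y := by
  have : Nontrivial E := nontrivial_of_finrank_pos (zero_lt_one.trans hE)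
  obtain ⟨a, ha⟩ := exists_ne (0 : E)
  obtain ⟨b, hab⟩ := exists_linearIndependent_pair_of_one_lt_finrank hE ha
  have hb : b ≠ 0 := hab.ne_zero 1
  rw [LinearIndependent.pair_iff' ha] at hab
  have hNa := pos_of_abs_homogeneous_of_subadditive hN0 hNhom hNtri ha
  have hNb := pos_of_abs_homogeneous_of_subadditive hN0 hNhom hNtri hb
  refine ⟨(N a)⁻¹ • a, (N b)⁻¹ • b, inv_smul_self_eq_one hNhom hNa,
    inv_smul_self_eq_one hNhom hNb, fun h => ?_, fun h => ?_⟩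
  · apply hab (N b * (N a)⁻¹)
    rw [mul_smul, h, smul_inv_smul₀ hNb.ne']
  · apply hab (-N b * (N a)⁻¹)
    rw [mul_smul, h, smul_neg, neg_smul, neg_neg, smul_inv_smul₀ hNb.ne']

end Homogeneous

lemma exists_isExtrOn_norm_sq_ne_ne_neg {E : Type*} [SeminormedAddCommGroup E] {S : Set E}
    (hS : IsCompact S) {x y : E} (hx : x ∈ S) (hy : y ∈ S) (hxy : x ≠ y) (hxy' : x ≠ -y) :
    ∃ v w, v ∈ S ∧ w ∈ S ∧ v ≠ w ∧ v ≠ -w ∧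
      IsExtrOn (fun z => ‖z‖ ^ 2) S v ∧ IsExtrOn (fun z => ‖z‖ ^ 2) S w := by
  obtain ⟨v, hv, hvmax⟩ := hS.exists_isMaxOn ⟨x, hx⟩ (continuous_norm.pow 2).continuousOn
  obtain ⟨w, hw, hwmin⟩ := hS.exists_isMinOn ⟨x, hx⟩ (continuous_norm.pow 2).continuousOn
  by_cases hvw : ‖v‖ ^ 2 = ‖w‖ ^ 2
  · have hmax : ∀ z ∈ S, IsMaxOn (fun z => ‖z‖ ^ 2) S z := fun z hz u hu =>
      (hvmax hu).trans (hvw.trans_le (hwmin hz))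
    exact ⟨x, y, hx, hy, hxy, hxy', (hmax x hx).isExtr, (hmax y hy).isExtr⟩
  · refine ⟨v, w, hv, hw, ?_, ?_, hvmax.isExtr, hwmin.isExtr⟩
    · rintro rfl
      exact hvw rfl
    · rintro rfl
      exact hvw (by rw [norm_neg])

lemma HasFDerivAt.apply_self_eq_of_homogeneous {E : Type*} [NormedAddCommGroup E]
    [NormedSpace ℝ E] {N : E → ℝ} {f' : StrongDual ℝ E} {x : E} (hf : HasFDerivAt N f' x)
    (hhom : ∀ t : ℝ, 0 < t → N (t • x) = t * N x) : f' x = N x := by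
  have hray : HasDerivAt (fun t : ℝ => t • x) x 1 := by
    simpa using (hasDerivAt_id (1 : ℝ)).smul_const x
  have hchain : HasDerivAt (fun t : ℝ => N (t • x)) (f' x) 1 :=
    (by simpa using hf : HasFDerivAt N f' ((1 : ℝ) • x)).comp_hasDerivAt 1 hray
  have hlin : HasDerivAt (fun t : ℝ => N (t • x)) (N x) 1 := by
    refine (hasDerivAt_mul_const (N x)).congr_of_eventuallyEq ?_
    filter_upwards [eventually_gt_nhds one_pos] with t ht
    simpa using hhom t ht
  exact hchain.unique hlin

section Lagrange

variable {E : Type*} [NormedAddCommGroup E] [InnerProductSpace ℝ E] [CompleteSpace E]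
  {N : E → ℝ} {f' : StrongDual ℝ E} {x₀ : E}

open scoped RealInnerProductSpace

lemma IsLocalExtrOn.exists_hasGradientAt_smul_of_norm_sq
    (hextr : IsLocalExtrOn (fun x => ‖x‖ ^ 2) {x | N x = N x₀} x₀)
    (hf : HasStrictFDerivAt N f' x₀) (hx₀ : x₀ ≠ 0) :
    ∃ c : ℝ, HasGradientAt N (c • x₀) x₀ := by
  obtain ⟨a, b, hab, hmul⟩ :=
    hextr.exists_multipliers_of_hasStrictFDerivAt_1d hf (hasStrictFDerivAt_norm_sq x₀)
  have hmul_apply : ∀ y, a * f' y + 2 * (b * ⟪x₀, y⟫) = 0 := fun y => by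
    simpa [two_smul, ← two_mul] using congr($hmul y)
  have ha : a ≠ 0 := by
    rintro rfl
    have hb : b ≠ 0 := by simpa using hab
    have := hmul_apply x₀
    simp [hb, hx₀] at this
  have hdual : toDual ℝ E (-(2 * b / a) • x₀) = f' := by
    ext y
    rw [toDual_apply_apply, real_inner_smul_left]
    field_simp
    linarith [hmul_apply y]
  exact ⟨_, hasGradientAt_iff_hasFDerivAt.mpr (hdual ▸ hf.hasFDerivAt)⟩

lemma IsLocalExtrOn.inv_norm_smul_gradient_eq_of_norm_sq
    (hhom : ∀ t : ℝ, 0 < t → N (t • x₀) = t * N x₀) (hpos : 0 < N x₀)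
    (hf : HasStrictFDerivAt N f' x₀)
    (hextr : IsLocalExtrOn (fun x => ‖x‖ ^ 2) {x | N x = N x₀} x₀) :
    ‖gradient N x₀‖⁻¹ • gradient N x₀ = ‖x₀‖⁻¹ • x₀ := by
  have hx₀ : x₀ ≠ 0 := by
    rintro rfl
    have := hhom 2 two_pos
    simp only [smul_zero] at this
    linarith
  obtain ⟨c, hc⟩ := hextr.exists_hasGradientAt_smul_of_norm_sq hf hx₀
  have heuler := hc.hasFDerivAt.apply_self_eq_of_homogeneous hhom
  rw [toDual_apply_apply, real_inner_smul_left, real_inner_self_eq_norm_sq] at heuler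
  have hc_pos : 0 < c := pos_of_mul_pos_left (heuler ▸ hpos) (by positivity)
  rw [hc.gradient]
  exact (SameRay.sameRay_pos_smul_left x₀ hc_pos).inv_norm_smul_eq
    (smul_ne_zero hc_pos.ne' hx₀) hx₀

end Lagrange

theorem gauss_map_two_fixed_directions_general (n : ℕ) (hn : 2 ≤ n)
    (N : EuclideanSpace ℝ (Fin n) → ℝ)
    (hN0 : ∀ x, N x = 0 ↔ x = 0)
    (hNhom : ∀ (c : ℝ) (x), N (c • x) = |c| * N x)
    (hNtri : ∀ x y, N (x + y) ≤ N x + N y)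
    (hNC1 : ContDiffOn ℝ 1 N {(0 : EuclideanSpace ℝ (Fin n))}ᶜ) :
    ∃ v w : EuclideanSpace ℝ (Fin n), N v = 1 ∧ N w = 1 ∧ v ≠ w ∧ v ≠ -w ∧
      ‖gradient N v‖⁻¹ • gradient N v = ‖v‖⁻¹ • v ∧
      ‖gradient N w‖⁻¹ • gradient N w = ‖w‖⁻¹ • w := by
  have hS := isCompact_setOf_eq_one hN0 hNhom hNtri hNC1.continuousOn
  obtain ⟨x, y, hx, hy, hxy, hxy'⟩ :=
    exists_pair_eq_one_ne_ne_neg (by rwa [finrank_euclideanSpace_fin]) hN0 hNhom hNtri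
  obtain ⟨v, w, hv, hw, hvw, hvw', hv_extr, hw_extr⟩ :=
    exists_isExtrOn_norm_sq_ne_ne_neg hS hx hy hxy hxy'
  have hgauss : ∀ z, N z = 1 → IsExtrOn (fun z => ‖z‖ ^ 2) {x | N x = 1} z →
      ‖gradient N z‖⁻¹ • gradient N z = ‖z‖⁻¹ • z := by
    intro z hz hextr
    have hz0 : z ≠ 0 := by rintro rfl; simp [(hN0 0).mpr rfl] at hz
    have hC1 := hNC1.contDiffAt (isOpen_compl_singleton.mem_nhds hz0)
    refine IsLocalExtrOn.inv_norm_smul_gradient_eq_of_norm_sq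
      (fun t ht => by rw [hNhom, abs_of_pos ht]) (hz ▸ one_pos)
      (hC1.hasStrictFDerivAt one_ne_zero) ?_
    rw [hz]
    exact hextr.localize
  exact ⟨v, w, hv, hw, hvw, hvw', hgauss v hv hv_extr, hgauss w hw hw_extr⟩

/-- **The Gauss map of a strictly convex `C¹`-regular norm has two fixed radial
directions** (Iseli, Lemma 4.2): there exist `v, w ∈ S_N` with `v ≠ w` and
`v ≠ -w` such that `G(v) = v/|v|` and `G(w) = w/|w|`, where
`G(x) = ∇N(x)/|∇N(x)|` is the Gauss map and `|·|` is the Euclidean norm. -/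
theorem gauss_map_two_fixed_directions (n : ℕ) (hn : 2 ≤ n)
    (N : EuclideanSpace ℝ (Fin n) → ℝ)
    (hN0 : ∀ x, N x = 0 ↔ x = 0)
    (hNhom : ∀ (c : ℝ) (x), N (c • x) = |c| * N x)
    (hNtri : ∀ x y, N (x + y) ≤ N x + N y)
    (hNsc : ∀ x y, N x = 1 → N y = 1 → x ≠ y → N ((1 / 2 : ℝ) • (x + y)) < 1)
    (hNC1 : ContDiffOn ℝ 1 N {(0 : EuclideanSpace ℝ (Fin n))}ᶜ) :
    ∃ v w : EuclideanSpace ℝ (Fin n), N v = 1 ∧ N w = 1 ∧ v ≠ w ∧ v ≠ -w ∧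
      ‖gradient N v‖⁻¹ • gradient N v = ‖v‖⁻¹ • v ∧
      ‖gradient N w‖⁻¹ • gradient N w = ‖w‖⁻¹ • w :=
  gauss_map_two_fixed_directions_general n hn N hN0 hNhom hNtri hNC1
end
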